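/- arXiv:1409.7160 — 8 statements merged into one kernel-verified Lean document; each statement's English description precedes it below -/
import Mathlib

section
/- Let N ≥ 1 be an integer, let X be a nonempty subset of {1,…,N}, and let 𝒫 be a finite set of prime numbers. If Σ_{p∈𝒫} (log p)/|X mod p| > log N, then |X| ≤ (Σ_{p∈𝒫} log p) / (Σ_{p∈𝒫} (log p)/|X mod p| − log N). (Gallagher's larger sieve.) -/
/-! Count the pairs `(x, y) ∈ X × X` with `x ≡ y (mod p)`, weighted by `log p`. By Cauchy–Schwarz
over the residue classes, there are at least `|X|² / |X mod p|` such pairs for each `p`. On the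
other hand, for `x ≠ y` the primes with `p ∣ x - y` have product at most `|x - y| ≤ N`, so each
off-diagonal pair carries total weight at most `log N`, and each diagonal pair at most
`∑ log p`. Comparing the two bounds gives `|X|² ∑ log p / |X mod p| ≤ |X| ∑ log p + |X|² log N`. -/

open Finset

theorem sq_card_le_card_image_mul_card_collisions {α β : Type*} [DecidableEq β]
    (s : Finset α) (f : α → β) :
    #s ^ 2 ≤ #(s.image f) * #{q ∈ s ×ˢ s | f q.1 = f q.2} := by
  have hcollisions : #{q ∈ s ×ˢ s | f q.1 = f q.2} = ∑ c ∈ s.image f, #{x ∈ s | f x = c} ^ 2 := by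
    rw [card_eq_sum_card_fiberwise (f := fun q => f q.1) fun q hq =>
      mem_image_of_mem f (mem_product.1 (mem_filter.1 hq).1).1]
    refine sum_congr rfl fun c _ => ?_
    rw [filter_filter, sq, ← card_product, ← filter_product]
    congr 1
    refine filter_congr fun q _ => ?_
    constructor
    · rintro ⟨h, rfl⟩; exact ⟨rfl, h.symm⟩
    · rintro ⟨h₁, h₂⟩; exact ⟨h₁.trans h₂.symm, h₁⟩
  rw [card_eq_sum_card_image f s, hcollisions]
  exact sq_sum_le_card_mul_sum_sq

theorem sum_log_le_log_of_prime_dvd {s : Finset ℕ} {d : ℕ} (hd : d ≠ 0)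
    (hs : ∀ p ∈ s, p.Prime ∧ p ∣ d) : ∑ p ∈ s, Real.log p ≤ Real.log d := by
  have hprod : ∏ p ∈ s, p ∣ d :=
    prod_primes_dvd d (fun p hp => (hs p hp).1.prime) fun p hp => (hs p hp).2
  rw [← Real.log_prod fun p hp => by exact_mod_cast (hs p hp).1.ne_zero, ← Nat.cast_prod]
  exact Real.log_le_log (by exact_mod_cast prod_pos fun p hp => (hs p hp).1.pos)
    (by exact_mod_cast Nat.le_of_dvd (Nat.pos_of_ne_zero hd) hprod)

theorem sum_log_filter_natCast_eq_le_log {N x y : ℕ} (hx : x ≤ N) (hy : y ≤ N) (hxy : x ≠ y)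
    {P : Finset ℕ} (hP : ∀ p ∈ P, p.Prime) :
    ∑ p ∈ P with (x : ZMod p) = y, Real.log p ≤ Real.log N := by
  set d := ((y : ℤ) - x).natAbs
  have hdvd : ∀ p ∈ {p ∈ P | (x : ZMod p) = y}, p.Prime ∧ p ∣ d := fun p hp =>
    ⟨hP p (mem_filter.1 hp).1,
      Int.natCast_dvd.1 ((ZMod.natCast_eq_natCast_iff x y p).1 (mem_filter.1 hp).2).dvd⟩
  have hd : d ≠ 0 := by omega
  calc _ ≤ Real.log d := sum_log_le_log_of_prime_dvd hd hdvd
    _ ≤ Real.log N := Real.log_le_log (by exact_mod_cast Nat.pos_of_ne_zero hd)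
        (by exact_mod_cast (by omega : d ≤ N))

theorem sum_mul_card_filter_eq_sum_sum_filter {ι κ M : Type*} [CommSemiring M]
    (P : Finset ι) (T : Finset κ) (R : ι → κ → Prop) [∀ p t, Decidable (R p t)] (w : ι → M) :
    ∑ p ∈ P, w p * #{t ∈ T | R p t} = ∑ t ∈ T, ∑ p ∈ P with R p t, w p := by
  simp only [sum_filter, card_filter, Nat.cast_sum, Nat.cast_ite, Nat.cast_one, Nat.cast_zero,
    mul_sum, mul_ite, mul_one, mul_zero]
  exact sum_comm

theorem sum_product_self_le {α : Type*} [DecidableEq α] (s : Finset α) (f : α × α → ℝ)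
    {A B : ℝ} (hB : 0 ≤ B) (hdiag : ∀ x ∈ s, f (x, x) ≤ A)
    (hoff : ∀ x ∈ s, ∀ y ∈ s, x ≠ y → f (x, y) ≤ B) :
    ∑ q ∈ s ×ˢ s, f q ≤ #s * A + #s ^ 2 * B := by
  rw [← diag_union_offDiag, sum_union (disjoint_diag_offDiag s)]
  have hsum_diag : ∑ q ∈ s.diag, f q ≤ #s * A := by
    simpa [diag_card] using sum_le_card_nsmul s.diag f A fun
      | (x, y), hq => by
        obtain ⟨hx, rfl : x = y⟩ := mem_diag.1 hq
        exact hdiag x hx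
  have hsum_offDiag : ∑ q ∈ s.offDiag, f q ≤ #s ^ 2 * B :=
    calc _ ≤ #s.offDiag * B := by
          simpa using sum_le_card_nsmul s.offDiag f B fun q hq => by
            obtain ⟨hx, hy, hxy⟩ := mem_offDiag.1 hq
            exact hoff q.1 hx q.2 hy hxy
      _ ≤ #s ^ 2 * B := by
          rw [sq]
          gcongr
          exact_mod_cast (offDiag_card s).trans_le (Nat.sub_le _ _)
  linarith

theorem gallagher_larger_sieve_general (N : ℕ) (X : Finset ℕ)
    (hXsub : X ⊆ Finset.Icc 1 N) (hXne : X.Nonempty)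
    (P : Finset ℕ) (hP : ∀ p ∈ P, p.Prime)
    (hpos : Real.log N <
      ∑ p ∈ P, Real.log p / ((X.image (fun x : ℕ => (x : ZMod p))).card : ℝ)) :
    (X.card : ℝ) ≤ (∑ p ∈ P, Real.log p) /
      ((∑ p ∈ P, Real.log p / ((X.image (fun x : ℕ => (x : ZMod p))).card : ℝ)) - Real.log N) := by
  set S := ∑ p ∈ P, Real.log p / ((X.image (fun x : ℕ => (x : ZMod p))).card : ℝ)
  set A := ∑ p ∈ P, Real.log p
  have hlog : ∀ p ∈ P, 0 ≤ Real.log p := fun p hp =>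
    Real.log_nonneg (by exact_mod_cast (hP p hp).one_le)
  have hcollisions : ∀ p ∈ P, (#X : ℝ) ^ 2 * (Real.log p / #(X.image (fun x : ℕ => (x : ZMod p))))
      ≤ Real.log p * #{q ∈ X ×ˢ X | (q.1 : ZMod p) = q.2} := fun p hp => by
    rw [mul_div_left_comm]
    gcongr
    exact div_le_of_le_mul₀ (by positivity) (by positivity)
      (by exact_mod_cast (sq_card_le_card_image_mul_card_collisions X
        (fun x : ℕ => (x : ZMod p))).trans_eq (mul_comm _ _))
  have hpairs : (#X : ℝ) ^ 2 * S ≤ #X * A + #X ^ 2 * Real.log N :=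
    calc (#X : ℝ) ^ 2 * S ≤ ∑ p ∈ P, Real.log p * #{q ∈ X ×ˢ X | (q.1 : ZMod p) = q.2} := by
          rw [mul_sum]; exact sum_le_sum hcollisions
      _ = ∑ q ∈ X ×ˢ X, ∑ p ∈ P with (q.1 : ZMod p) = q.2, Real.log p :=
          sum_mul_card_filter_eq_sum_sum_filter P _ _ _
      _ ≤ #X * A + #X ^ 2 * Real.log N :=
          sum_product_self_le X _ (Real.log_natCast_nonneg N)
            (fun x _ => sum_le_sum_of_subset_of_nonneg (filter_subset _ P) fun p hp _ => hlog p hp)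
            fun x hx y hy hxy => sum_log_filter_natCast_eq_le_log
              (mem_Icc.1 (hXsub hx)).2 (mem_Icc.1 (hXsub hy)).2 hxy hP
  have hX : (0 : ℝ) < #X := by exact_mod_cast hXne.card_pos
  rw [le_div_iff₀ (sub_pos.2 hpos)]
  refine le_of_mul_le_mul_left ?_ hX
  linarith

/-- **Gallagher's larger sieve.** If `X ⊆ {1,…,N}` is nonempty and `𝒫` is a finite
set of primes with `∑_{p∈𝒫} log p / |X mod p| > log N`, then
`|X| ≤ (∑_{p∈𝒫} log p) / (∑_{p∈𝒫} log p / |X mod p| − log N)`. -/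
theorem gallagher_larger_sieve (N : ℕ) (hN : 1 ≤ N) (X : Finset ℕ)
    (hXsub : X ⊆ Finset.Icc 1 N) (hXne : X.Nonempty)
    (P : Finset ℕ) (hP : ∀ p ∈ P, p.Prime)
    (hpos : Real.log N <
      ∑ p ∈ P, Real.log p / ((X.image (fun x : ℕ => (x : ZMod p))).card : ℝ)) :
    (X.card : ℝ) ≤ (∑ p ∈ P, Real.log p) /
      ((∑ p ∈ P, Real.log p / ((X.image (fun x : ℕ => (x : ZMod p))).card : ℝ)) - Real.log N) :=
  gallagher_larger_sieve_general N X hXsub hXne P hP hpos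
end

section
/- For every real α ∈ (0,1/2] and ε ∈ (0,1) there exists a constant C = C(α,ε) > 0 such that for every integer N ≥ 2 and every subset X ⊆ {1,…,N} satisfying |X mod p| ≤ α·p for every prime p, one has |X| ≤ C·N^{α+ε}. -/
open Finset Real Nat

lemma tele_step (n : ℕ) (hn : 1 ≤ n) :
    4 / (((n:ℝ)+1) * Real.sqrt (n+1)) ≤ 8 / Real.sqrt n - 8 / Real.sqrt (n+1) := by
  have hn1 : (1:ℝ) ≤ (n:ℝ) := by exact_mod_cast hn
  set a := Real.sqrt n with ha'
  set b := Real.sqrt (n+1) with hb'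
  have ha : 0 < a := Real.sqrt_pos.2 (by linarith)
  have hb : 0 < b := Real.sqrt_pos.2 (by linarith)
  have ha2 : a^2 = n := Real.sq_sqrt (by linarith)
  have hb2 : b^2 = (n:ℝ)+1 := Real.sq_sqrt (by linarith)
  have hab : a ≤ b := Real.sqrt_le_sqrt (by linarith)
  have key : 4 * (a * b) * (a + b) ≤ 8 * ((n+1) * b) := by nlinarith
  rw [div_sub_div _ _ ha.ne' hb.ne', div_le_div_iff₀ (by positivity) (by positivity)]
  have hba : (8*b - 8*a) * (b + a) = 8 := by nlinarith
  nlinarith [mul_pos ha hb, mul_pos (mul_pos ha hb) hb, sq_nonneg (b - a)]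

lemma tele_sum (n : ℕ) (hn : 1 ≤ n) :
    ∑ m ∈ Icc 2 n, 4 / ((m:ℝ) * Real.sqrt m) ≤ 8 - 8 / Real.sqrt n := by
  induction n with
  | zero => omega
  | succ k ih =>
    rcases Nat.lt_or_ge k 1 with hk | hk
    · interval_cases k
      simp [Real.sqrt_one]
    · rw [Finset.sum_Icc_succ_top (by omega)]
      have h2 := tele_step k hk
      have := ih hk
      push_cast
      push_cast at this h2
      linarith

lemma logweight_sum (n : ℕ) :
    ∑ m ∈ Icc 2 n, Real.log m / ((m:ℝ) * ((m:ℝ) - 1)) ≤ 8 := by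
  rcases Nat.lt_or_ge n 1 with hn | hn
  · interval_cases n; simp
  calc ∑ m ∈ Icc 2 n, Real.log m / ((m:ℝ) * ((m:ℝ) - 1))
      ≤ ∑ m ∈ Icc 2 n, 4 / ((m:ℝ) * Real.sqrt m) := by
        apply Finset.sum_le_sum
        intro m hm
        simp only [Finset.mem_Icc] at hm
        have hm2 : (2:ℝ) ≤ (m:ℝ) := by exact_mod_cast hm.1
        have hs : 0 < Real.sqrt m := Real.sqrt_pos.2 (by linarith)
        have hs2 : (Real.sqrt m)^2 = m := Real.sq_sqrt (by linarith)
        have hlog : Real.log m ≤ 2 * Real.sqrt m := by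
          have h1 : Real.log m = 2 * Real.log (Real.sqrt m) := by
            conv_lhs => rw [← hs2, Real.log_pow]
            push_cast; ring
          rw [h1]
          have := Real.log_le_sub_one_of_pos hs
          linarith
        rw [div_le_div_iff₀ (by nlinarith) (by positivity)]
        -- log m * (m * sqrt m) ≤ 4 * (m * (m-1))
        have h3 : Real.log m * ((m:ℝ) * Real.sqrt m) ≤ 2 * Real.sqrt m * ((m:ℝ) * Real.sqrt m) := by
          apply mul_le_mul_of_nonneg_right hlog (by positivity)
        have h4 : 2 * Real.sqrt m * ((m:ℝ) * Real.sqrt m) = 2 * (m:ℝ) * (m:ℝ) := by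
          ring_nf; nlinarith [hs2]
        nlinarith
    _ ≤ 8 - 8 / Real.sqrt n := tele_sum n hn
    _ ≤ 8 := by
        have : 0 < Real.sqrt n := Real.sqrt_pos.2 (by exact_mod_cast hn)
        have : 0 ≤ 8 / Real.sqrt n := by positivity
        linarith

lemma geom_bound (p : ℕ) (hp : 2 ≤ p) (b : ℕ) :
    ∑ i ∈ Finset.Ico 1 b, (1/(p:ℝ))^i ≤ 1/((p:ℝ)-1) := by
  have hp1 : (2:ℝ) ≤ (p:ℝ) := by exact_mod_cast hp
  rcases Nat.lt_or_ge b 1 with hb | hb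
  · interval_cases b
    rw [show Finset.Ico 1 0 = ∅ from rfl, Finset.sum_empty]
    have : (0:ℝ) < (p:ℝ) - 1 := by linarith
    positivity
  have hxlt : (1/(p:ℝ)) < 1 := by rw [div_lt_one (by linarith)]; linarith
  have hx0 : (0:ℝ) ≤ 1/(p:ℝ) := by positivity
  rw [geom_sum_Ico' (ne_of_lt hxlt) hb]
  have h1 : (1/(p:ℝ))^1 - (1/(p:ℝ))^b ≤ 1/(p:ℝ) := by
    have : (0:ℝ) ≤ (1/(p:ℝ))^b := by positivity
    simp only [pow_one]; linarith
  have h2 : (0:ℝ) < 1 - 1/(p:ℝ) := by linarith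
  calc ((1/(p:ℝ))^1 - (1/(p:ℝ))^b)/(1 - 1/(p:ℝ)) ≤ (1/(p:ℝ))/(1 - 1/(p:ℝ)) := by
        exact (div_le_div_iff_of_pos_right h2).2 h1
    _ = 1/((p:ℝ)-1) := by
        rw [div_eq_div_iff h2.ne' (by intro h; rw [sub_eq_zero] at h; linarith)]
        field_simp

lemma legendre_bound (p : ℕ) (hp : p.Prime) (n : ℕ) :
    ((n !).factorization p : ℝ) ≤ (n:ℝ) / ((p:ℝ)-1) := by
  haveI : Fact p.Prime := ⟨hp⟩
  have hp2 : 2 ≤ p := hp.two_le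
  have hp1 : (2:ℝ) ≤ (p:ℝ) := by exact_mod_cast hp2
  rw [Nat.factorization_def _ hp, padicValNat_factorial (b := Nat.log p n + 1) (Nat.lt_succ_self _)]
  push_cast
  calc (∑ i ∈ Finset.Ico 1 (Nat.log p n + 1), ((n / p ^ i : ℕ) : ℝ))
      ≤ ∑ i ∈ Finset.Ico 1 (Nat.log p n + 1), (n:ℝ) * (1/(p:ℝ))^i := by
        apply Finset.sum_le_sum; intro i _
        calc ((n / p ^ i : ℕ) : ℝ) ≤ (n:ℝ)/((p:ℝ)^i) := by
              exact_mod_cast Nat.cast_div_le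
          _ = (n:ℝ) * (1/(p:ℝ))^i := by rw [div_pow, one_pow]; ring
    _ = (n:ℝ) * ∑ i ∈ Finset.Ico 1 (Nat.log p n + 1), (1/(p:ℝ))^i := by rw [Finset.mul_sum]
    _ ≤ (n:ℝ) * (1/((p:ℝ)-1)) := by
        apply mul_le_mul_of_nonneg_left (geom_bound p hp2 _) (by positivity)
    _ = (n:ℝ)/((p:ℝ)-1) := by ring

lemma log_factorial_eq (n : ℕ) :
    Real.log (n !) = ∑ p ∈ Nat.primesBelow (n+1), ((n !).factorization p : ℝ) * Real.log p := by
  have h0 : (n ! : ℕ) ≠ 0 := Nat.factorial_ne_zero n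
  have hsub : (n !).primeFactors ⊆ Nat.primesBelow (n+1) := by
    intro p hp
    rw [Nat.mem_primeFactors] at hp
    rw [Nat.mem_primesBelow]
    exact ⟨Nat.lt_succ_of_le ((Nat.Prime.dvd_factorial hp.1).mp hp.2.1), hp.1⟩
  rw [← Finset.sum_subset hsub (by
    intro p _ hp
    rw [← Nat.support_factorization, Finsupp.notMem_support_iff] at hp
    rw [hp]; simp)]
  conv_lhs => rw [← Nat.factorization_prod_pow_eq_self h0]
  rw [Finsupp.prod]
  push_cast
  rw [Real.log_prod]
  · apply Finset.sum_congr rfl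
    intro p hp
    rw [Real.log_pow]
  · intro p hp
    rw [Nat.support_factorization, Nat.mem_primeFactors] at hp
    have := hp.1.pos
    positivity

lemma stirling_lower (n : ℕ) (hn : 1 ≤ n) :
    (n:ℝ) * Real.log n - n ≤ Real.log (n !) := by
  have hn0 : (0:ℝ) < n := by exact_mod_cast hn
  have hf : (0:ℝ) < (n ! : ℝ) := by exact_mod_cast Nat.factorial_pos n
  have key : ((n:ℝ))^n / (n ! : ℝ) ≤ Real.exp n := by
    calc ((n:ℝ))^n / (n ! : ℝ) = (n:ℝ)^n / (n ! : ℕ) := by norm_cast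
      _ ≤ ∑ i ∈ Finset.range (n+1), (n:ℝ)^i / (i ! : ℕ) := by
          apply Finset.single_le_sum (f := fun i => (n:ℝ)^i / (i ! : ℕ))
          · intro i _; positivity
          · exact Finset.self_mem_range_succ n
      _ ≤ Real.exp n := Real.sum_le_exp_of_nonneg (by positivity) (n+1)
  have key2 : ((n:ℝ))^n ≤ Real.exp n * (n ! : ℝ) := by
    rw [div_le_iff₀ hf] at key; linarith [key]
  have := Real.log_le_log (by positivity) key2
  rw [Real.log_pow, Real.log_mul (Real.exp_ne_zero n) hf.ne', Real.log_exp] at this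
  linarith

lemma mertens_lower (n : ℕ) (hn : 2 ≤ n) :
    Real.log n - 9 ≤ ∑ p ∈ Nat.primesBelow (n+1), Real.log p / p := by
  have hn0 : (0:ℝ) < (n:ℝ) := by exact_mod_cast Nat.lt_of_lt_of_le Nat.zero_lt_two hn
  set P := Nat.primesBelow (n+1) with hP
  have hPmem : ∀ p ∈ P, p.Prime ∧ (2:ℝ) ≤ (p:ℝ) ∧ p ≤ n := by
    intro p hp
    rw [hP, Nat.mem_primesBelow] at hp
    exact ⟨hp.2, by exact_mod_cast hp.2.two_le, by omega⟩
  have step1 : Real.log (n !) ≤ ∑ p ∈ P, ((n:ℝ)/((p:ℝ)-1)) * Real.log p := by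
    rw [log_factorial_eq]
    apply Finset.sum_le_sum
    intro p hp
    obtain ⟨hpp, hp2, -⟩ := hPmem p hp
    apply mul_le_mul_of_nonneg_right (legendre_bound p hpp n)
    exact Real.log_nonneg (by linarith)
  have step2 : ∑ p ∈ P, ((n:ℝ)/((p:ℝ)-1)) * Real.log p
      = (n:ℝ) * ((∑ p ∈ P, Real.log p / p) + ∑ p ∈ P, Real.log p / ((p:ℝ)*((p:ℝ)-1))) := by
    rw [← Finset.sum_add_distrib, Finset.mul_sum]
    apply Finset.sum_congr rfl
    intro p hp
    obtain ⟨-, hp2, -⟩ := hPmem p hp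
    have h1 : (p:ℝ) ≠ 0 := by linarith
    have h2 : (p:ℝ) - 1 ≠ 0 := by intro h; rw [sub_eq_zero] at h; linarith
    field_simp
    ring
  have step3 : ∑ p ∈ P, Real.log p / ((p:ℝ)*((p:ℝ)-1)) ≤ 8 := by
    calc ∑ p ∈ P, Real.log p / ((p:ℝ)*((p:ℝ)-1))
        ≤ ∑ m ∈ Finset.Icc 2 n, Real.log m / ((m:ℝ)*((m:ℝ)-1)) := by
          apply Finset.sum_le_sum_of_subset_of_nonneg
          · intro p hp
            obtain ⟨hpp, -, hpn⟩ := hPmem p hp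
            rw [Finset.mem_Icc]
            exact ⟨hpp.two_le, hpn⟩
          · intro m hm _
            rw [Finset.mem_Icc] at hm
            have hm2 : (2:ℝ) ≤ (m:ℝ) := by exact_mod_cast hm.1
            have : (0:ℝ) ≤ Real.log m := Real.log_nonneg (by linarith)
            have : (0:ℝ) < (m:ℝ)*((m:ℝ)-1) := by nlinarith
            positivity
      _ ≤ 8 := logweight_sum n
  have main := (stirling_lower n (by omega)).trans (step1.trans_eq step2)
  have hM : Real.log n - 1 ≤ (∑ p ∈ P, Real.log p / p) + 8 := by
    have hchain : (n:ℝ) * (Real.log n - 1) ≤ (n:ℝ) * ((∑ p ∈ P, Real.log p / p) + 8) := by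
      calc (n:ℝ) * (Real.log n - 1) = (n:ℝ) * Real.log n - n := by ring
        _ ≤ (n:ℝ) * ((∑ p ∈ P, Real.log p / p) + ∑ p ∈ P, Real.log p / ((p:ℝ)*((p:ℝ)-1))) := main
        _ ≤ (n:ℝ) * ((∑ p ∈ P, Real.log p / p) + 8) := by
            apply mul_le_mul_of_nonneg_left (by linarith) (le_of_lt hn0)
    exact le_of_mul_le_mul_left hchain hn0
  linarith

lemma theta_upper (n : ℕ) :
    ∑ p ∈ Nat.primesBelow (n+1), Real.log p ≤ (n:ℝ) * Real.log 4 := by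
  have hprim : ∏ p ∈ Nat.primesBelow (n+1), p = primorial n := by
    rw [primorial, Nat.primesBelow]
  have hpos : (0:ℝ) < ∏ p ∈ Nat.primesBelow (n+1), (p:ℝ) := by
    apply Finset.prod_pos
    intro p hp
    exact_mod_cast (Nat.prime_of_mem_primesBelow hp).pos
  calc ∑ p ∈ Nat.primesBelow (n+1), Real.log p
      = Real.log (∏ p ∈ Nat.primesBelow (n+1), (p:ℝ)) := by
        rw [Real.log_prod]
        intro p hp
        exact_mod_cast (Nat.prime_of_mem_primesBelow hp).pos.ne'
    _ ≤ Real.log ((4:ℝ)^n) := by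
        apply Real.log_le_log hpos
        rw [← Nat.cast_prod, hprim]
        exact_mod_cast primorial_le_4_pow n
    _ = (n:ℝ) * Real.log 4 := by rw [Real.log_pow]

lemma cs_lemma {β : Type*} [DecidableEq β] (X : Finset ℕ) (f : ℕ → β) :
    ((X.card : ℝ))^2 ≤ ((X.image f).card : ℝ) *
      ∑ x ∈ X, ∑ y ∈ X, (if f x = f y then (1:ℝ) else 0) := by
  classical
  set I := X.image f with hI
  have hmaps : ∀ x ∈ X, f x ∈ I := fun x hx => Finset.mem_image_of_mem f hx
  set g : β → ℝ := fun r => ((X.filter (fun x => f x = r)).card : ℝ) with hg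
  have hcard : (X.card : ℝ) = ∑ r ∈ I, g r := by
    rw [Finset.card_eq_sum_card_fiberwise hmaps]
    push_cast
    rfl
  have hsq : (∑ r ∈ I, g r)^2 ≤ (I.card : ℝ) * ∑ r ∈ I, (g r)^2 :=
    sq_sum_le_card_mul_sum_sq
  have hfib : ∑ r ∈ I, (g r)^2 = ∑ x ∈ X, g (f x) := by
    rw [← Finset.sum_fiberwise_of_maps_to hmaps (fun x => g (f x))]
    apply Finset.sum_congr rfl
    intro r _
    have heq : ∀ x ∈ X.filter (fun x => f x = r), g (f x) = g r := by
      intro x hx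
      rw [Finset.mem_filter] at hx
      rw [hx.2]
    rw [Finset.sum_congr rfl heq, Finset.sum_const, nsmul_eq_mul, sq, hg]
  have hinner : ∀ x ∈ X, g (f x) = ∑ y ∈ X, (if f x = f y then (1:ℝ) else 0) := by
    intro x _
    rw [hg]
    simp only
    rw [Finset.card_filter]
    push_cast
    apply Finset.sum_congr rfl
    intro y _
    by_cases h : f y = f x <;> simp [h, Ne.symm, eq_comm] <;> simp [fun hh => h hh.symm]
  rw [hcard]
  calc (∑ r ∈ I, g r)^2 ≤ (I.card : ℝ) * ∑ r ∈ I, (g r)^2 := hsq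
    _ = (I.card : ℝ) * ∑ x ∈ X, ∑ y ∈ X, (if f x = f y then (1:ℝ) else 0) := by
        rw [hfib, Finset.sum_congr rfl hinner]

lemma radical_bound (s : Finset ℕ) (d : ℕ) (hd : 0 < d)
    (hs : ∀ p ∈ s, p.Prime ∧ p ∣ d) :
    ∑ p ∈ s, Real.log p ≤ Real.log d := by
  have hsub : s ⊆ d.primeFactors := by
    intro p hp
    rw [Nat.mem_primeFactors]
    exact ⟨(hs p hp).1, (hs p hp).2, hd.ne'⟩
  have hdvd : ∏ p ∈ s, p ∣ d :=
    (Finset.prod_dvd_prod_of_subset _ _ _ hsub).trans (Nat.prod_primeFactors_dvd d)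
  have hppos : 0 < ∏ p ∈ s, p := Finset.prod_pos (fun p hp => (hs p hp).1.pos)
  calc ∑ p ∈ s, Real.log p = Real.log (∏ p ∈ s, (p:ℝ)) := by
        rw [Real.log_prod]
        intro p hp
        exact_mod_cast (hs p hp).1.pos.ne'
    _ ≤ Real.log d := by
        have : (0:ℝ) < ∏ p ∈ s, (p:ℝ) := by
          rw [← Nat.cast_prod]; exact_mod_cast hppos
        apply Real.log_le_log this
        rw [← Nat.cast_prod]
        exact_mod_cast Nat.le_of_dvd hd hdvd


lemma pair_bound (N Q : ℕ) (hN : 2 ≤ N) (x y : ℕ) (hx : 1 ≤ x) (hxN : x ≤ N)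
    (hy : 1 ≤ y) (hyN : y ≤ N) (hxy : y < x) :
    ∑ p ∈ Nat.primesBelow Q, (if ((x : ZMod p) = (y : ZMod p)) then Real.log p else 0)
      ≤ Real.log N := by
  rw [Finset.sum_ite, Finset.sum_const_zero, add_zero]
  have hd : 0 < x - y := by omega
  calc ∑ p ∈ (Nat.primesBelow Q).filter (fun p => (x : ZMod p) = (y : ZMod p)), Real.log p
      ≤ Real.log ((x - y : ℕ) : ℝ) := by
        apply radical_bound _ _ hd
        intro p hp
        rw [Finset.mem_filter] at hp
        refine ⟨Nat.prime_of_mem_primesBelow hp.1, ?_⟩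
        have := (ZMod.natCast_eq_natCast_iff x y p).mp hp.2
        exact (Nat.modEq_iff_dvd' (le_of_lt hxy)).mp this.symm
    _ ≤ Real.log N := by
        apply Real.log_le_log (by exact_mod_cast hd)
        have : x - y ≤ N := by omega
        exact_mod_cast this

set_option maxHeartbeats 1000000 in
/-- **Larger sieve, special case.** For `α ∈ (0,1/2]` and `ε ∈ (0,1)` there is `C > 0`
such that any `X ⊆ {1,…,N}` with `|X mod p| ≤ α·p` for all primes `p` satisfies
`|X| ≤ C·N^(α+ε)`. -/
theorem larger_sieve_special_case (α ε : ℝ) (hα0 : 0 < α) (hα : α ≤ 1 / 2)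
    (hε0 : 0 < ε) (hε1 : ε < 1) :
    ∃ C : ℝ, 0 < C ∧ ∀ N : ℕ, 2 ≤ N → ∀ X : Finset ℕ, X ⊆ Finset.Icc 1 N →
      (∀ p : ℕ, p.Prime → ((X.image (fun x : ℕ => (x : ZMod p))).card : ℝ) ≤ α * p) →
      (X.card : ℝ) ≤ C * (N : ℝ) ^ (α + ε) := by
  have hlog2 : (0:ℝ) < Real.log 2 := Real.log_pos (by norm_num)
  have hlog4 : (0:ℝ) < Real.log 4 := Real.log_pos (by norm_num)
  refine ⟨4 * Real.log 4 / (ε * Real.log 2) + Real.exp (18/ε), by positivity, ?_⟩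
  intro N hN X hXsub hXmod
  set C : ℝ := 4 * Real.log 4 / (ε * Real.log 2) + Real.exp (18/ε) with hC
  have hs0 : 0 < α + ε := by linarith
  have hNR : (2:ℝ) ≤ (N:ℝ) := by exact_mod_cast hN
  have hN0 : (0:ℝ) < (N:ℝ) := by linarith
  have hNs1 : (1:ℝ) < (N:ℝ) ^ (α+ε) :=
    (Real.one_lt_rpow_iff_of_pos hN0).2 (Or.inl ⟨by linarith, hs0⟩)
  have hlogN : Real.log 2 ≤ Real.log N := Real.log_le_log (by norm_num) hNR
  -- trivial bound |X| ≤ N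
  have hKN : (X.card : ℝ) ≤ (N:ℝ) := by
    have := Finset.card_le_card hXsub
    rw [Nat.card_Icc] at this
    exact_mod_cast by omega
  rcases X.eq_empty_or_nonempty with rfl | hXne
  · simp only [Finset.card_empty, Nat.cast_zero]
    positivity
  have hK1 : (1:ℝ) ≤ (X.card : ℝ) := by
    exact_mod_cast Finset.card_pos.2 hXne
  by_cases hbig : 18 ≤ ε * Real.log N
  case neg =>
    -- small N: N ≤ exp (18/ε)
    push_neg at hbig
    have hlogN18 : Real.log N < 18/ε := by
      rw [lt_div_iff₀ hε0]; linarith [mul_comm ε (Real.log N)]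
    have hNle : (N:ℝ) ≤ Real.exp (18/ε) := by
      rw [← Real.exp_log hN0]
      exact Real.exp_le_exp.2 (le_of_lt hlogN18)
    calc (X.card : ℝ) ≤ (N:ℝ) := hKN
      _ ≤ Real.exp (18/ε) := hNle
      _ ≤ Real.exp (18/ε) * (N:ℝ)^(α+ε) := by
          nlinarith [Real.exp_pos (18/ε)]
      _ ≤ C * (N:ℝ)^(α+ε) := by
          apply mul_le_mul_of_nonneg_right _ (by positivity)
          rw [hC]
          have : 0 < 4 * Real.log 4 / (ε * Real.log 2) := by positivity
          linarith
  case pos =>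
    set K := (X.card : ℝ) with hKdef
    set Q := ⌈(N:ℝ)^(α+ε)⌉₊ with hQdef
    have hQ1 : (N:ℝ)^(α+ε) ≤ (Q:ℝ) := Nat.le_ceil _
    have hQ2 : (Q:ℝ) ≤ 2 * (N:ℝ)^(α+ε) := by
      have := Nat.ceil_lt_add_one (le_of_lt (lt_trans one_pos hNs1)) (a := (N:ℝ)^(α+ε))
      linarith
    have hQge2 : 2 ≤ Q := by
      have h1 : (1:ℝ) < (Q:ℝ) := lt_of_lt_of_le hNs1 hQ1
      have : 1 < Q := by exact_mod_cast h1
      omega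
    set P := Nat.primesBelow (Q+1) with hPdef
    have hM : Real.log Q - 9 ≤ ∑ p ∈ P, Real.log p / p := mertens_lower Q hQge2
    have hθ0 : 0 ≤ ∑ p ∈ P, Real.log p := by
      apply Finset.sum_nonneg
      intro p hp
      exact Real.log_nonneg (by exact_mod_cast (Nat.prime_of_mem_primesBelow hp).one_lt.le)
    have hθ : ∑ p ∈ P, Real.log p ≤ (Q:ℝ) * Real.log 4 := theta_upper Q
    -- per-prime Cauchy-Schwarz
    have hper : ∀ p ∈ P, (Real.log p / p) * K^2 ≤
        α * ∑ x ∈ X, ∑ y ∈ X, (if ((x : ZMod p) = (y : ZMod p)) then Real.log p else 0) := by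
      intro p hp
      have hpp := Nat.prime_of_mem_primesBelow hp
      have hp2 : (2:ℝ) ≤ (p:ℝ) := by exact_mod_cast hpp.two_le
      have hlogp : 0 ≤ Real.log p := Real.log_nonneg (by linarith)
      have hcs := cs_lemma X (fun x : ℕ => (x : ZMod p))
      have hS0 : 0 ≤ ∑ x ∈ X, ∑ y ∈ X, (if ((x : ZMod p) = (y : ZMod p)) then (1:ℝ) else 0) := by
        apply Finset.sum_nonneg; intro x _
        apply Finset.sum_nonneg; intro y _
        split <;> norm_num
      have hKp : K^2 ≤ α * p * ∑ x ∈ X, ∑ y ∈ X,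
          (if ((x : ZMod p) = (y : ZMod p)) then (1:ℝ) else 0) := by
        calc K^2 ≤ ((X.image (fun x : ℕ => (x : ZMod p))).card : ℝ) *
              ∑ x ∈ X, ∑ y ∈ X, (if ((x : ZMod p) = (y : ZMod p)) then (1:ℝ) else 0) := hcs
          _ ≤ α * p * ∑ x ∈ X, ∑ y ∈ X, (if ((x : ZMod p) = (y : ZMod p)) then (1:ℝ) else 0) :=
              mul_le_mul_of_nonneg_right (hXmod p hpp) hS0
      have hexpand : Real.log p * ∑ x ∈ X, ∑ y ∈ X,
          (if ((x : ZMod p) = (y : ZMod p)) then (1:ℝ) else 0)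
          = ∑ x ∈ X, ∑ y ∈ X, (if ((x : ZMod p) = (y : ZMod p)) then Real.log p else 0) := by
        rw [Finset.mul_sum]
        apply Finset.sum_congr rfl
        intro x _
        rw [Finset.mul_sum]
        apply Finset.sum_congr rfl
        intro y _
        split <;> simp
      calc (Real.log p / p) * K^2
          ≤ (Real.log p / p) * (α * p * ∑ x ∈ X, ∑ y ∈ X,
              (if ((x : ZMod p) = (y : ZMod p)) then (1:ℝ) else 0)) := by
            apply mul_le_mul_of_nonneg_left hKp (by positivity)
        _ = α * (Real.log p * ∑ x ∈ X, ∑ y ∈ X,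
              (if ((x : ZMod p) = (y : ZMod p)) then (1:ℝ) else 0)) := by
            field_simp
        _ = α * ∑ x ∈ X, ∑ y ∈ X,
              (if ((x : ZMod p) = (y : ZMod p)) then Real.log p else 0) := by rw [hexpand]
    -- sum over primes
    have hsum : (∑ p ∈ P, Real.log p / p) * K^2 ≤
        α * (K * (∑ p ∈ P, Real.log p) + K^2 * Real.log N) := by
      calc (∑ p ∈ P, Real.log p / p) * K^2
          = ∑ p ∈ P, (Real.log p / p) * K^2 := by rw [Finset.sum_mul]
        _ ≤ ∑ p ∈ P, α * ∑ x ∈ X, ∑ y ∈ X,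
              (if ((x : ZMod p) = (y : ZMod p)) then Real.log p else 0) :=
            Finset.sum_le_sum hper
        _ = α * ∑ x ∈ X, ∑ y ∈ X, ∑ p ∈ P,
              (if ((x : ZMod p) = (y : ZMod p)) then Real.log p else 0) := by
            rw [← Finset.mul_sum]
            congr 1
            rw [Finset.sum_comm]
            apply Finset.sum_congr rfl
            intro x _
            rw [Finset.sum_comm]
        _ ≤ α * ∑ x ∈ X, ∑ y ∈ X,
              ((if x = y then (∑ p ∈ P, Real.log p) else 0) + Real.log N) := by
            apply mul_le_mul_of_nonneg_left _ (le_of_lt hα0)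
            apply Finset.sum_le_sum
            intro x hx
            apply Finset.sum_le_sum
            intro y hy
            have hxI := hXsub hx
            have hyI := hXsub hy
            rw [Finset.mem_Icc] at hxI hyI
            by_cases hxy : x = y
            · subst hxy
              have heqsum : (∑ p ∈ P, if ((x : ZMod p) = (x : ZMod p)) then Real.log p else 0)
                  = ∑ p ∈ P, Real.log p :=
                Finset.sum_congr rfl (fun p _ => if_pos rfl)
              rw [heqsum, if_pos rfl]
              have : (0:ℝ) ≤ Real.log N := Real.log_nonneg (by linarith)
              linarith
            · rw [if_neg hxy, zero_add]
              rcases Nat.lt_or_ge x y with h | h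
              · have hpb := pair_bound N (Q+1) hN y x hyI.1 hyI.2 hxI.1 hxI.2 h
                calc ∑ p ∈ P, (if ((x : ZMod p) = (y : ZMod p)) then Real.log p else 0)
                    = ∑ p ∈ P, (if ((y : ZMod p) = (x : ZMod p)) then Real.log p else 0) := by
                      apply Finset.sum_congr rfl
                      intro p _
                      simp only [eq_comm]
                  _ ≤ Real.log N := hpb
              · have hlt : y < x := by omega
                exact pair_bound N (Q+1) hN x y hxI.1 hxI.2 hyI.1 hyI.2 hlt
        _ = α * (K * (∑ p ∈ P, Real.log p) + K^2 * Real.log N) := by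
            congr 1
            have hdiag : ∀ x ∈ X, (∑ y ∈ X, (if x = y then (∑ p ∈ P, Real.log p) else 0))
                = ∑ p ∈ P, Real.log p := by
              intro x hx
              rw [Finset.sum_ite_eq]
              exact if_pos hx
            calc ∑ x ∈ X, ∑ y ∈ X, ((if x = y then (∑ p ∈ P, Real.log p) else 0) + Real.log N)
                = ∑ x ∈ X, ((∑ y ∈ X, (if x = y then (∑ p ∈ P, Real.log p) else 0))
                    + K * Real.log N) := by
                  apply Finset.sum_congr rfl
                  intro x _
                  rw [Finset.sum_add_distrib, Finset.sum_const, nsmul_eq_mul]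
              _ = ∑ x ∈ X, ((∑ p ∈ P, Real.log p) + K * Real.log N) := by
                  apply Finset.sum_congr rfl
                  intro x hx
                  rw [hdiag x hx]
              _ = K * (∑ p ∈ P, Real.log p) + K^2 * Real.log N := by
                  rw [Finset.sum_const, nsmul_eq_mul]
                  ring
    -- arithmetic conclusion
    have hlogQ : (α+ε) * Real.log N ≤ Real.log Q := by
      calc (α+ε) * Real.log N = Real.log ((N:ℝ)^(α+ε)) := (Real.log_rpow hN0 _).symm
        _ ≤ Real.log Q := Real.log_le_log (by positivity) hQ1
    have hK2 : K^2 * ((α+ε) * Real.log N - 9) ≤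
        α * K * ((Q:ℝ) * Real.log 4) + K^2 * (α * Real.log N) := by
      have h1 : K^2 * ((α+ε) * Real.log N - 9) ≤ K^2 * (∑ p ∈ P, Real.log p / p) := by
        apply mul_le_mul_of_nonneg_left _ (by positivity)
        linarith
      have h2' : K ^ 2 * (∑ p ∈ P, Real.log p / p)
          ≤ α * (K * (∑ p ∈ P, Real.log p) + K ^ 2 * Real.log N) := by
        calc K ^ 2 * (∑ p ∈ P, Real.log p / p) = (∑ p ∈ P, Real.log p / p) * K ^ 2 := by ring
          _ ≤ α * (K * (∑ p ∈ P, Real.log p) + K ^ 2 * Real.log N) := hsum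
      have h3 : α * (K * (∑ p ∈ P, Real.log p) + K^2 * Real.log N)
          ≤ α * K * ((Q:ℝ) * Real.log 4) + K^2 * (α * Real.log N) := by
        have h4 : K * (∑ p ∈ P, Real.log p) ≤ K * ((Q:ℝ) * Real.log 4) :=
          mul_le_mul_of_nonneg_left hθ (by positivity)
        nlinarith
      linarith
    have hεN : 9 ≤ ε * Real.log N / 2 := by linarith
    have hKfin : K * (ε * Real.log N / 2) ≤ α * ((Q:ℝ) * Real.log 4) := by
      have hpos : 0 < K := by linarith
      have : K * (K * (ε * Real.log N / 2)) ≤ K * (α * ((Q:ℝ) * Real.log 4)) := by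
        calc K * (K * (ε * Real.log N / 2)) = K^2 * (ε * Real.log N / 2) := by ring
          _ ≤ K^2 * ((α+ε) * Real.log N - 9 - α * Real.log N) := by
              apply mul_le_mul_of_nonneg_left _ (by positivity)
              linarith
          _ ≤ α * K * ((Q:ℝ) * Real.log 4) := by linarith [hK2]
          _ = K * (α * ((Q:ℝ) * Real.log 4)) := by ring
      exact le_of_mul_le_mul_left this hpos
    -- finish
    have hQb : α * ((Q:ℝ) * Real.log 4) ≤ (N:ℝ)^(α+ε) * Real.log 4 := by
      have : α * (Q:ℝ) ≤ (N:ℝ)^(α+ε) := by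
        calc α * (Q:ℝ) ≤ (1/2) * (Q:ℝ) := by
              apply mul_le_mul_of_nonneg_right hα (by positivity)
          _ ≤ (1/2) * (2 * (N:ℝ)^(α+ε)) := by linarith
          _ = (N:ℝ)^(α+ε) := by ring
      calc α * ((Q:ℝ) * Real.log 4) = (α * (Q:ℝ)) * Real.log 4 := by ring
        _ ≤ (N:ℝ)^(α+ε) * Real.log 4 := mul_le_mul_of_nonneg_right this hlog4.le
    have hfinal : K * (ε * Real.log 2 / 2) ≤ (N:ℝ)^(α+ε) * Real.log 4 := by
      calc K * (ε * Real.log 2 / 2) ≤ K * (ε * Real.log N / 2) := by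
            apply mul_le_mul_of_nonneg_left _ (by linarith)
            linarith [mul_le_mul_of_nonneg_left hlogN (le_of_lt hε0)]
        _ ≤ α * ((Q:ℝ) * Real.log 4) := hKfin
        _ ≤ (N:ℝ)^(α+ε) * Real.log 4 := hQb
    have hCmain : K ≤ (4 * Real.log 4 / (ε * Real.log 2)) * (N:ℝ)^(α+ε) := by
      rw [div_mul_eq_mul_div, le_div_iff₀ (by positivity)]
      calc K * (ε * Real.log 2) = 2 * (K * (ε * Real.log 2 / 2)) := by ring
        _ ≤ 2 * ((N:ℝ)^(α+ε) * Real.log 4) := by linarith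
        _ ≤ 4 * Real.log 4 * (N:ℝ)^(α+ε) := by nlinarith
    calc K ≤ (4 * Real.log 4 / (ε * Real.log 2)) * (N:ℝ)^(α+ε) := hCmain
      _ ≤ C * (N:ℝ)^(α+ε) := by
          apply mul_le_mul_of_nonneg_right _ (by positivity)
          rw [hC]
          linarith [Real.exp_pos (18/ε)]
end

section
/- Let f ∈ ℚ[x] be a polynomial of degree d ≥ 1. Then the number of pairwise non-associate irreducible factors of the two-variable polynomial f(X) − f(Y) in ℚ[X,Y] is at most τ(d), the number of positive divisors of d. -/
open scoped Classical

/-- The number of pairwise non-associate irreducible factors of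
`f(X) − f(Y)` in `ℚ[X,Y]`. -/
noncomputable def numIrreducibleFactorsDiff (f : Polynomial ℚ) : ℕ :=
  ((UniqueFactorizationMonoid.factors
      ((Polynomial.aeval (MvPolynomial.X 0) f : MvPolynomial (Fin 2) ℚ) -
        Polynomial.aeval (MvPolynomial.X 1) f)).map Associates.mk).toFinset.card

/-!
Taking the top-degree homogeneous part of a polynomial in `ℚ[X,Y]` is multiplicative, and for
`f(X) − f(Y)` it is `lc(f) (X^d − Y^d)`. Put `Y = 1` in the top-degree part of a polynomial: the
resulting polynomial in `X` has degree at most the total degree, with equality for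
`f(X) − f(Y)`. Since both degrees add along products, equality then holds for every factor `g`,
so a nonconstant `g` is sent to a nonunit factor of `lc(f) (X^d − 1)`. Hence `f(X) − f(Y)` has
at most as many irreducible factors, even counted with multiplicity, as
`X^d − 1 = ∏_{e ∣ d} Φ_e`, which has `τ(d)` of them.
-/

open Polynomial UniqueFactorizationMonoid

namespace MvPolynomial

section ScaleVars

variable {σ R : Type*} [CommSemiring R]

noncomputable def scaleVars : MvPolynomial σ R →ₐ[R] Polynomial (MvPolynomial σ R) :=
  aeval fun i => Polynomial.C (X i) * Polynomial.X

theorem eval_one_scaleVars (p : MvPolynomial σ R) : (scaleVars p).eval 1 = p := by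
  have : (Polynomial.evalRingHom 1).comp (scaleVars (σ := σ) (R := R)).toRingHom = RingHom.id _ :=
    ringHom_ext (fun a => by simp [scaleVars, Polynomial.algebraMap_apply, algebraMap_eq])
      (fun i => by simp [scaleVars])
  exact RingHom.congr_fun this p

theorem eval_zero_scaleVars (p : MvPolynomial σ R) :
    (scaleVars p).eval 0 = C (constantCoeff p) := by
  have : (Polynomial.evalRingHom 0).comp (scaleVars (σ := σ) (R := R)).toRingHom =
      C.comp constantCoeff :=
    ringHom_ext (fun a => by simp [scaleVars, Polynomial.algebraMap_apply, algebraMap_eq])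
      (fun i => by simp [scaleVars])
  exact RingHom.congr_fun this p

theorem scaleVars_injective : Function.Injective (scaleVars (σ := σ) (R := R)) :=
  Function.LeftInverse.injective eval_one_scaleVars

theorem eq_C_of_natDegree_scaleVars_eq_zero {p : MvPolynomial σ R}
    (h : (scaleVars p).natDegree = 0) : p = C (constantCoeff p) := by
  calc p = (scaleVars p).eval 1 := (eval_one_scaleVars p).symm
    _ = (scaleVars p).eval 0 := by
      rw [eq_C_of_natDegree_eq_zero h, Polynomial.eval_C, Polynomial.eval_C]
    _ = C (constantCoeff p) := eval_zero_scaleVars p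

theorem scaleVars_monomial (s : σ →₀ ℕ) (a : R) :
    scaleVars (monomial s a) = Polynomial.C (monomial s a) * Polynomial.X ^ s.degree := by
  rw [scaleVars, aeval_monomial, monomial_eq, Finsupp.degree_apply, Finsupp.prod, Finsupp.prod]
  simp only [mul_pow, Finset.prod_mul_distrib, Finset.prod_pow_eq_pow_sum, map_mul, map_prod,
    map_pow, Polynomial.algebraMap_apply, algebraMap_eq, mul_assoc]

theorem coeff_scaleVars (p : MvPolynomial σ R) (k : ℕ) :
    (scaleVars p).coeff k = homogeneousComponent k p := by
  induction p using MvPolynomial.induction_on' with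
  | monomial s a =>
    ext d
    rw [coeff_homogeneousComponent, scaleVars_monomial, Polynomial.coeff_C_mul_X_pow,
      apply_ite (coeff d), coeff_zero, coeff_monomial]
    by_cases hsd : s = d <;> simp [hsd, eq_comm]
  | add p q hp hq => simp [hp, hq]

theorem coeff_scaleVars_aeval_X (f : R[X]) (i : σ) (k : ℕ) :
    (scaleVars (Polynomial.aeval (X i) f)).coeff k = C (f.coeff k) * X i ^ k := by
  rw [← Polynomial.aeval_algHom_apply]
  have : (scaleVars (X i : MvPolynomial σ R)) = Polynomial.C (X i) * Polynomial.X := aeval_X _ _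
  rw [this, ← Polynomial.aeval_map_algebraMap (MvPolynomial σ R), ← comp_eq_aeval,
    comp_C_mul_X_coeff, Polynomial.coeff_map, algebraMap_eq]

theorem natDegree_aeval_le_totalDegree {v : σ → R[X]} (hv : ∀ i, (v i).natDegree ≤ 1)
    (p : MvPolynomial σ R) : (aeval v p).natDegree ≤ p.totalDegree := by
  conv_lhs => rw [p.as_sum, map_sum]
  refine natDegree_sum_le_of_forall_le _ _ fun s hs => ?_
  calc (aeval v (monomial s (coeff s p))).natDegree
      ≤ ∑ i ∈ s.support, (v i ^ s i).natDegree := by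
        rw [aeval_monomial, Polynomial.algebraMap_apply]
        exact (natDegree_C_mul_le _ _).trans (natDegree_prod_le _ _)
    _ ≤ ∑ i ∈ s.support, s i := Finset.sum_le_sum fun i _ =>
        (natDegree_pow_le_of_le _ (hv i)).trans (mul_one _).le
    _ ≤ p.totalDegree := le_totalDegree hs

end ScaleVars

section Dehomogenize

variable {R : Type*} [CommRing R] [IsDomain R]

/-- By `coeff_scaleVars`, the top homogeneous component of `p`, evaluated at `X 1 = 1`. -/
noncomputable def dehomLeadingForm : MvPolynomial (Fin 2) R →* R[X] :=
  (aeval ![Polynomial.X, 1]).toMonoidHom.comp (leadingCoeffHom.comp scaleVars.toMonoidHom)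

theorem dehomLeadingForm_apply (p : MvPolynomial (Fin 2) R) :
    dehomLeadingForm p = aeval ![Polynomial.X, 1] ((scaleVars p).leadingCoeff) := rfl

theorem natDegree_dehomLeadingForm_le (p : MvPolynomial (Fin 2) R) :
    (dehomLeadingForm p).natDegree ≤ (scaleVars p).natDegree := by
  rw [dehomLeadingForm_apply, Polynomial.leadingCoeff, coeff_scaleVars]
  refine (natDegree_aeval_le_totalDegree (fun i => ?_) _).trans
    (homogeneousComponent_isHomogeneous _ _).totalDegree_le
  fin_cases i <;> simp

theorem natDegree_dehomLeadingForm_eq_of_dvd {p q : MvPolynomial (Fin 2) R} (hpq : p ∣ q)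
    (hq : dehomLeadingForm q ≠ 0)
    (h : (dehomLeadingForm q).natDegree = (scaleVars q).natDegree) :
    (dehomLeadingForm p).natDegree = (scaleVars p).natDegree := by
  obtain ⟨c, rfl⟩ := hpq
  have hpc : p * c ≠ 0 := by rintro hpc; simp [hpc, dehomLeadingForm_apply] at hq
  rw [map_mul] at hq
  have hp := (map_ne_zero_iff _ scaleVars_injective).mpr (left_ne_zero_of_mul hpc)
  have hc := (map_ne_zero_iff _ scaleVars_injective).mpr (right_ne_zero_of_mul hpc)
  rw [map_mul, map_mul, natDegree_mul (left_ne_zero_of_mul hq) (right_ne_zero_of_mul hq),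
    natDegree_mul hp hc] at h
  have := natDegree_dehomLeadingForm_le p
  have := natDegree_dehomLeadingForm_le c
  omega

end Dehomogenize

theorem not_isUnit_dehomLeadingForm {K : Type*} [Field K] {p q : MvPolynomial (Fin 2) K}
    (hp : Irreducible p) (hpq : p ∣ q) (hq : dehomLeadingForm q ≠ 0)
    (h : (dehomLeadingForm q).natDegree = (scaleVars q).natDegree) :
    ¬IsUnit (dehomLeadingForm p) := by
  intro hu
  have hp0 : (scaleVars p).natDegree = 0 :=
    natDegree_dehomLeadingForm_eq_of_dvd hpq hq h ▸ natDegree_eq_zero_of_isUnit hu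
  have hpC := eq_C_of_natDegree_scaleVars_eq_zero hp0
  have hc : constantCoeff p ≠ 0 := fun hc => hp.ne_zero (by rw [hpC, hc, map_zero])
  exact hp.not_isUnit (hpC ▸ (isUnit_iff_ne_zero.mpr hc).map C)

section Diff

variable {R : Type*} [CommRing R]

noncomputable def diffPoly (f : R[X]) : MvPolynomial (Fin 2) R :=
  Polynomial.aeval (X 0) f - Polynomial.aeval (X 1) f

theorem coeff_scaleVars_diffPoly (f : R[X]) (k : ℕ) :
    (scaleVars (diffPoly f)).coeff k = C (f.coeff k) * (X 0 ^ k - X 1 ^ k) := by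
  rw [diffPoly, map_sub, Polynomial.coeff_sub, coeff_scaleVars_aeval_X, coeff_scaleVars_aeval_X,
    mul_sub]

theorem X_zero_pow_sub_X_one_pow_ne_zero [Nontrivial R] {k : ℕ} (hk : k ≠ 0) :
    (X 0 ^ k - X 1 ^ k : MvPolynomial (Fin 2) R) ≠ 0 := fun h => by
  simpa [zero_pow hk] using congrArg (eval ![1, 0]) h

variable [IsDomain R] {f : R[X]}

theorem natDegree_scaleVars_diffPoly (hd : 0 < f.natDegree) :
    (scaleVars (diffPoly f)).natDegree = f.natDegree := by
  refine natDegree_eq_of_le_of_coeff_ne_zero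
    (natDegree_le_iff_coeff_eq_zero.mpr fun k hk => ?_) ?_
  · rw [coeff_scaleVars_diffPoly, coeff_eq_zero_of_natDegree_lt hk, map_zero, zero_mul]
  · rw [coeff_scaleVars_diffPoly]
    exact mul_ne_zero (C_ne_zero.mpr (leadingCoeff_ne_zero.mpr (ne_zero_of_natDegree_gt hd)))
      (X_zero_pow_sub_X_one_pow_ne_zero hd.ne')

theorem dehomLeadingForm_diffPoly (hd : 0 < f.natDegree) :
    dehomLeadingForm (diffPoly f) =
      Polynomial.C f.leadingCoeff * (Polynomial.X ^ f.natDegree - 1) := by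
  rw [dehomLeadingForm_apply, Polynomial.leadingCoeff, natDegree_scaleVars_diffPoly hd,
    coeff_scaleVars_diffPoly]
  simp

theorem dehomLeadingForm_diffPoly_ne_zero (hd : 0 < f.natDegree) :
    dehomLeadingForm (diffPoly f) ≠ 0 := by
  rw [dehomLeadingForm_diffPoly hd]
  exact mul_ne_zero
    (Polynomial.C_ne_zero.mpr (leadingCoeff_ne_zero.mpr (ne_zero_of_natDegree_gt hd)))
    (X_pow_sub_C_ne_zero hd 1)

theorem natDegree_dehomLeadingForm_diffPoly (hd : 0 < f.natDegree) :
    (dehomLeadingForm (diffPoly f)).natDegree = (scaleVars (diffPoly f)).natDegree := by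
  rw [dehomLeadingForm_diffPoly hd, natDegree_scaleVars_diffPoly hd,
    natDegree_C_mul (leadingCoeff_ne_zero.mpr (ne_zero_of_natDegree_gt hd)), ← Polynomial.C_1,
    natDegree_X_pow_sub_C]

end Diff

end MvPolynomial

namespace UniqueFactorizationMonoid

variable {α : Type*} [CommMonoidWithZero α] [UniqueFactorizationMonoid α]

theorem card_le_card_factors_prod {s : Multiset α} (h0 : s.prod ≠ 0)
    (hs : ∀ x ∈ s, ¬IsUnit x) :
    Multiset.card s ≤ Multiset.card (factors s.prod) := by
  induction s using Multiset.induction with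
  | empty => simp
  | cons a s ih =>
    rw [Multiset.prod_cons] at h0 ⊢
    have ha := left_ne_zero_of_mul h0
    have hs0 := right_ne_zero_of_mul h0
    rw [Multiset.card_eq_card_of_rel (factors_mul ha hs0), Multiset.card_add,
      Multiset.card_cons]
    have := Multiset.card_pos.mpr ((factors_pos ha).mpr (hs a (Multiset.mem_cons_self a s))).ne'
    have := ih hs0 fun x hx => hs x (Multiset.mem_cons_of_mem hx)
    omega

theorem card_factors_le_card_factors_map {β : Type*} [CommMonoidWithZero β]
    [UniqueFactorizationMonoid β] (φ : α →* β) {a : α} (ha : φ a ≠ 0)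
    (h : ∀ p ∈ factors a, ¬IsUnit (φ p)) :
    Multiset.card (factors a) ≤ Multiset.card (factors (φ a)) := by
  by_cases ha0 : a = 0
  · simp [ha0]
  have hassoc : Associated ((factors a).map φ).prod (φ a) := by
    rw [← map_multiset_prod]
    exact (factors_prod ha0).map φ
  rw [← hassoc.card_factors_eq, ← Multiset.card_map φ]
  exact card_le_card_factors_prod (hassoc.ne_zero_iff.mpr ha) (by simpa using h)

end UniqueFactorizationMonoid

theorem Polynomial.card_factors_X_pow_sub_one {d : ℕ} (hd : 0 < d) :
    Multiset.card (factors (X ^ d - 1 : ℚ[X])) = d.divisors.card := by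
  rw [← prod_cyclotomic_eq_X_pow_sub_one hd, Finset.prod_eq_multiset_prod]
  refine (Multiset.card_eq_card_of_rel (factors_unique irreducible_of_factor ?_
    (factors_prod ?_))).trans (Multiset.card_map _ _)
  · intro x hx
    obtain ⟨n, hn, rfl⟩ := Multiset.mem_map.mp hx
    exact cyclotomic.irreducible_rat (Nat.pos_of_mem_divisors hn)
  · exact Multiset.prod_ne_zero (by simp [cyclotomic_ne_zero])

/-- For `f ∈ ℚ[x]` of degree `d ≥ 1`, the number of pairwise non-associate irreducible
factors of `f(X) − f(Y)` in `ℚ[X,Y]` is at most `τ(d)`. -/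
theorem numIrreducibleFactorsDiff_le_tau (f : Polynomial ℚ) (hd : 1 ≤ f.natDegree) :
    numIrreducibleFactorsDiff f ≤ (f.natDegree).divisors.card := by
  set F := MvPolynomial.diffPoly f
  have hF0 := MvPolynomial.dehomLeadingForm_diffPoly_ne_zero hd
  have hlc : IsUnit (C f.leadingCoeff) :=
    isUnit_C.mpr (leadingCoeff_ne_zero.mpr (ne_zero_of_natDegree_gt hd)).isUnit
  calc numIrreducibleFactorsDiff f ≤ Multiset.card (factors F) :=
        (Multiset.toFinset_card_le _).trans (Multiset.card_map _ _).le
    _ ≤ Multiset.card (factors (MvPolynomial.dehomLeadingForm F)) :=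
        card_factors_le_card_factors_map _ hF0 fun p hp =>
          MvPolynomial.not_isUnit_dehomLeadingForm (irreducible_of_factor p hp)
            (dvd_of_mem_factors hp) hF0 (MvPolynomial.natDegree_dehomLeadingForm_diffPoly hd)
    _ = Multiset.card (factors (X ^ f.natDegree - 1 : ℚ[X])) := by
        rw [MvPolynomial.dehomLeadingForm_diffPoly hd]
        exact (associated_unit_mul_left _ _ hlc).card_factors_eq
    _ = f.natDegree.divisors.card := card_factors_X_pow_sub_one hd
end

section
/- Let E be a field, let F be a Galois extension of E, and let h ∈ F[X_1,…,X_n] be a nonzero polynomial in n variables. For an automorphism ξ ∈ Gal(F/E), let ξ(h) denote the polynomial obtained by applying ξ to every coefficient of h. Then the following are equivalent: (1) for every ξ ∈ Gal(F/E) there exists c ∈ F, c ≠ 0, with ξ(h) = c·h; (2) there exists α ∈ F, α ≠ 0, such that every coefficient of α·h lies in (the image of) E. -/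
/-!
Scaling `h` so that one of its coefficients becomes `1` turns condition (1) into invariance of
`α • h` under `Gal(F/E)`: comparing that coefficient forces the scalar to be `1`. A polynomial is
Galois invariant iff its coefficients are, i.e. iff they lie in `E`. Conversely, if `α • h` has
coefficients in `E` it is invariant, and then `ξ(h) = (α / ξ α) • h`.
-/

namespace MvPolynomial

variable {σ : Type*}

theorem map_smul {R S : Type*} [CommSemiring R] [CommSemiring S] (f : R →+* S) (a : R)
    (p : MvPolynomial σ R) : map f (a • p) = f a • map f p := by
  rw [smul_eq_C_mul, smul_eq_C_mul, RingHom.map_mul, map_C]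

theorem map_smul_eq_of_map_eq_smul {R : Type*} [CommSemiring R] (f : R →+* R)
    {p : MvPolynomial σ R} {α c : R} {m : σ →₀ ℕ} (hm : coeff m (α • p) = 1)
    (hf : map f p = c • p) : map f (α • p) = α • p := by
  have hm' : α * coeff m p = 1 := by rwa [coeff_smul, smul_eq_mul] at hm
  have hcoeff : f α * c * coeff m p = 1 := by
    have := congrArg (coeff m) (map_smul f α p)
    rwa [coeff_map, hm, RingHom.map_one, hf, smul_smul, coeff_smul, smul_eq_mul, eq_comm] at this
  have hscalar : f α * c = α :=
    calc f α * c = f α * c * (α * coeff m p) := by rw [hm', mul_one]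
      _ = α * (f α * c * coeff m p) := by ring
      _ = α := by rw [hcoeff, mul_one]
  rw [map_smul, hf, smul_smul, hscalar]

theorem exists_map_eq_smul_of_map_smul_eq {K : Type*} [Field K] (f : K →+* K)
    {p : MvPolynomial σ K} {α : K} (hα : α ≠ 0) (hf : map f (α • p) = α • p) :
    ∃ c : K, c ≠ 0 ∧ map f p = c • p := by
  have hfα : f α ≠ 0 := (map_ne_zero f).mpr hα
  refine ⟨α / f α, div_ne_zero hα hfα, ?_⟩
  rw [map_smul] at hf
  rw [← inv_smul_smul₀ hfα (map f p), hf, smul_smul, inv_mul_eq_div]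

theorem forall_map_algEquiv_eq_self_iff {E F : Type*} [Field E] [Field F] [Algebra E F]
    [IsGalois E F] (p : MvPolynomial σ F) :
    (∀ ξ : F ≃ₐ[E] F, map (ξ : F →+* F) p = p) ↔ ∀ m, coeff m p ∈ (algebraMap E F).range := by
  simp_rw [MvPolynomial.ext_iff, coeff_map]
  exact forall_comm.trans
    (forall_congr' fun m => (InfiniteGalois.mem_range_algebraMap_iff_fixed (coeff m p)).symm)

end MvPolynomial

open MvPolynomial

/-- **Galois descent for principal ideals of polynomial rings.** For a Galois extension
`F/E` and a nonzero `h ∈ F[X_1,…,X_n]`, the ideal `(h)` is fixed by every element of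
`Gal(F/E)` (i.e. each `ξ(h)` is a nonzero scalar multiple of `h`) if and only if `(h)`
is defined over `E` (i.e. some nonzero scalar multiple `α·h` has all coefficients in `E`). -/
theorem galois_descent_principal_ideal {E F : Type*} [Field E] [Field F] [Algebra E F]
    [IsGalois E F] {n : ℕ} (h : MvPolynomial (Fin n) F) (hh : h ≠ 0) :
    (∀ ξ : F ≃ₐ[E] F, ∃ c : F, c ≠ 0 ∧ MvPolynomial.map (ξ : F →+* F) h = c • h) ↔
      (∃ α : F, α ≠ 0 ∧ ∀ m : Fin n →₀ ℕ,
        MvPolynomial.coeff m (α • h) ∈ (algebraMap E F).range) := by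
  constructor
  · intro hfixed
    obtain ⟨m₀, hm₀⟩ := ne_zero_iff.mp hh
    have hnormal : coeff m₀ ((coeff m₀ h)⁻¹ • h) = 1 := by
      rw [coeff_smul, smul_eq_mul, inv_mul_cancel₀ hm₀]
    refine ⟨(coeff m₀ h)⁻¹, inv_ne_zero hm₀, (forall_map_algEquiv_eq_self_iff _).mp fun ξ => ?_⟩
    obtain ⟨c, -, hc⟩ := hfixed ξ
    exact map_smul_eq_of_map_eq_smul _ hnormal hc
  · rintro ⟨α, hα, hcoeff⟩ ξ
    exact exists_map_eq_smul_of_map_smul_eq _ hα ((forall_map_algEquiv_eq_self_iff _).mpr hcoeff ξ)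
end

section
/- Let g ∈ ℤ[X_1,…,X_n] be a polynomial whose image in (AlgebraicClosure ℚ)[X_1,…,X_n] is irreducible (i.e., g is absolutely irreducible over ℚ). Then for all but finitely many primes p, the image of g in (AlgebraicClosure 𝔽_p)[X_1,…,X_n] under coefficientwise reduction modulo p is irreducible. -/
/-!
Irreducibility of the image of `g` in `K[X_1,…,X_n]`, for a field `K`, is expressed by a
single first-order sentence in the language of rings: the factors of a factorisation over `K`
only involve monomials of degree at most `totalDegree g`, so it suffices to quantify over the
finitely many coefficients of two such factors. The sentence holds in `AlgebraicClosure ℚ`, so by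
completeness of `ACF 0` and compactness it holds in every algebraically closed field of
characteristic `p`, for all but finitely many primes `p`.
-/

open MvPolynomial FirstOrder Language Field Ring

namespace MvPolynomial

variable {σ R : Type*}

theorem totalDegree_map_le {S : Type*} [CommSemiring R] [CommSemiring S] (f : R →+* S)
    (p : MvPolynomial σ R) : (map f p).totalDegree ≤ p.totalDegree :=
  Finset.sup_mono (support_map_subset f p)

theorem degree_le_totalDegree_of_mem_support_of_mul_eq [CommRing R] [IsDomain R]
    {a b f : MvPolynomial σ R} (hab : a * b = f) (hf : f ≠ 0) {m : σ →₀ ℕ}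
    (hm : m ∈ a.support) : m.degree ≤ f.totalDegree :=
  (le_totalDegree hm).trans (totalDegree_le_of_dvd_of_isDomain ⟨b, hab.symm⟩ hf)

theorem exists_sum_monomial_eq_of_support_subset [CommSemiring R] {D : Finset (σ →₀ ℕ)}
    {a : MvPolynomial σ R} (ha : a.support ⊆ D) :
    ∃ v : D → R, ∑ m : D, monomial (m : σ →₀ ℕ) (v m) = a := by
  refine ⟨fun m => a.coeff m, ?_⟩
  rw [Finset.sum_coe_sort D (fun m => monomial m (a.coeff m)), ← Finset.sum_subset ha, ← as_sum]
  intro m _ hm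
  rw [notMem_support_iff.1 hm, monomial_zero]

variable {K : Type*} [Field K]

theorem isUnit_iff_totalDegree_eq_zero {a : MvPolynomial σ K} (ha : a ≠ 0) :
    IsUnit a ↔ a.totalDegree = 0 := by
  refine ⟨fun h => (isUnit_iff_totalDegree_of_isReduced.1 h).2, fun h => ?_⟩
  rw [totalDegree_eq_zero_iff_eq_C] at h
  refine h ▸ (isUnit_iff_ne_zero.2 fun h0 => ha ?_).map C
  rw [h, h0, C_0]

theorem irreducible_iff_totalDegree_of_mem {f : MvPolynomial σ K} (S : Set (MvPolynomial σ K))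
    (hS : ∀ a b, a * b = f → f ≠ 0 → a ∈ S) :
    Irreducible f ↔ f.totalDegree ≠ 0 ∧
      ∀ a ∈ S, ∀ b ∈ S, a * b = f → a.totalDegree = 0 ∨ b.totalDegree = 0 := by
  constructor
  · intro hf
    refine ⟨fun h0 => hf.not_isUnit ((isUnit_iff_totalDegree_eq_zero hf.ne_zero).2 h0),
      fun a _ b _ hab => ?_⟩
    have hab0 : a * b ≠ 0 := hab ▸ hf.ne_zero
    exact (hf.isUnit_or_isUnit hab.symm).imp
      (isUnit_iff_totalDegree_eq_zero (left_ne_zero_of_mul hab0)).1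
      (isUnit_iff_totalDegree_eq_zero (right_ne_zero_of_mul hab0)).1
  · rintro ⟨hdeg, hfactor⟩
    have hf0 : f ≠ 0 := by rintro rfl; exact hdeg totalDegree_zero
    refine ⟨fun hu => hdeg ((isUnit_iff_totalDegree_eq_zero hf0).1 hu), fun a b hab => ?_⟩
    have hab0 : a * b ≠ 0 := hab ▸ hf0
    exact (hfactor a (hS a b hab.symm hf0) b (hS b a (by rw [mul_comm, hab]) hf0) hab.symm).imp
      (isUnit_iff_totalDegree_eq_zero (left_ne_zero_of_mul hab0)).2
      (isUnit_iff_totalDegree_eq_zero (right_ne_zero_of_mul hab0)).2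

end MvPolynomial

namespace FirstOrder.Ring

variable {σ α K : Type*}

noncomputable def vanishingFormula (P : MvPolynomial σ (FreeCommRing α)) :
    Language.ring.Formula α :=
  Formula.iInf fun μ : P.support => Term.equal (termOfFreeCommRing (P.coeff μ)) 0

noncomputable def eqFormula (P Q : MvPolynomial σ (FreeCommRing α)) : Language.ring.Formula α :=
  vanishingFormula (P - Q)

noncomputable def isConstantFormula (P : MvPolynomial σ (FreeCommRing α)) :
    Language.ring.Formula α :=
  eqFormula P (C (P.coeff 0))

noncomputable def genericPoly (D : Finset (σ →₀ ℕ)) (c : D → α) :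
    MvPolynomial σ (FreeCommRing α) :=
  ∑ m : D, monomial (m : σ →₀ ℕ) (FreeCommRing.of (c m))

/-- The free variables, indexed by `D ⊕ D`, are the coefficients of two polynomials supported
in `D`. -/
noncomputable def irreducibleSentence (g : MvPolynomial σ ℤ) (D : Finset (σ →₀ ℕ)) :
    Language.ring.Sentence :=
  let gR : MvPolynomial σ (FreeCommRing (D ⊕ D)) := map (Int.castRingHom _) g
  let a := genericPoly D Sum.inl
  let b := genericPoly D Sum.inr
  Formula.iAlls (D ⊕ D) <| Formula.relabel Sum.inr <|
    ∼(isConstantFormula gR) ⊓ (eqFormula (a * b) gR ⟹ isConstantFormula a ⊔ isConstantFormula b)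

section CommRing

variable [CommRing K]

theorem map_lift_genericPoly (D : Finset (σ →₀ ℕ)) (c : D → α) (v : α → K) :
    map (FreeCommRing.lift v) (genericPoly D c) = ∑ m : D, monomial (m : σ →₀ ℕ) (v (c m)) := by
  simp [genericPoly]

theorem map_lift_map_intCast (g : MvPolynomial σ ℤ) (v : α → K) :
    map (FreeCommRing.lift v) (map (Int.castRingHom (FreeCommRing α)) g) =
      map (Int.castRingHom K) g := by
  rw [MvPolynomial.map_map, RingHom.ext_int ((FreeCommRing.lift v).comp _) (Int.castRingHom K)]

variable [CompatibleRing K]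

theorem realize_vanishingFormula (P : MvPolynomial σ (FreeCommRing α)) (v : α → K) :
    (vanishingFormula P).Realize v ↔ map (FreeCommRing.lift v) P = 0 := by
  simp only [vanishingFormula, Formula.realize_iInf, Formula.realize_equal,
    realize_termOfFreeCommRing, realize_zero, MvPolynomial.ext_iff, coeff_map, coeff_zero]
  refine ⟨fun h μ => ?_, fun h μ => h μ⟩
  by_cases hμ : μ ∈ P.support
  · exact h ⟨μ, hμ⟩
  · rw [notMem_support_iff.1 hμ, map_zero]

theorem realize_eqFormula (P Q : MvPolynomial σ (FreeCommRing α)) (v : α → K) :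
    (eqFormula P Q).Realize v ↔ map (FreeCommRing.lift v) P = map (FreeCommRing.lift v) Q := by
  rw [eqFormula, realize_vanishingFormula, map_sub, sub_eq_zero]

theorem realize_isConstantFormula (P : MvPolynomial σ (FreeCommRing α)) (v : α → K) :
    (isConstantFormula P).Realize v ↔ (map (FreeCommRing.lift v) P).totalDegree = 0 := by
  rw [isConstantFormula, realize_eqFormula, totalDegree_eq_zero_iff_eq_C, map_C, coeff_map]

end CommRing

theorem realize_irreducibleSentence [Field K] [CompatibleRing K] (g : MvPolynomial σ ℤ)
    (D : Finset (σ →₀ ℕ)) (hD : ∀ m : σ →₀ ℕ, m.degree ≤ g.totalDegree → m ∈ D) :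
    K ⊨ irreducibleSentence g D ↔ Irreducible (map (Int.castRingHom K) g) := by
  have hfactor_mem : ∀ a b, a * b = map (Int.castRingHom K) g → map (Int.castRingHom K) g ≠ 0 →
      a ∈ Set.range fun v : D → K => ∑ m : D, monomial (m : σ →₀ ℕ) (v m) := by
    intro a b hab hg
    refine exists_sum_monomial_eq_of_support_subset fun m hm => hD m ?_
    exact (degree_le_totalDegree_of_mem_support_of_mul_eq hab hg hm).trans
      (totalDegree_map_le _ g)
  rw [irreducible_iff_totalDegree_of_mem _ hfactor_mem, irreducibleSentence, Sentence.Realize,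
    Formula.realize_iAlls]
  simp only [Formula.realize_relabel, Sum.elim_comp_inr, Formula.realize_inf,
    Formula.realize_not, Formula.realize_imp, Formula.realize_sup, realize_isConstantFormula,
    realize_eqFormula, map_mul, map_lift_genericPoly, map_lift_map_intCast, forall_and,
    forall_const, Set.forall_mem_range]
  exact and_congr Iff.rfl
    ⟨fun h v w => h (Sum.elim v w), fun h x => h (x ∘ Sum.inl) (x ∘ Sum.inr)⟩

theorem exists_finset_forall_realize_of_realize_charZero (φ : Language.ring.Sentence)
    {K : Type*} [Field K] [CharZero K] [IsAlgClosed K] [CompatibleRing K] (h : K ⊨ φ) :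
    ∃ S : Finset ℕ, ∀ p ∉ S, p.Prime →
      ∀ (L : Type*) [Field L] [CharP L p] [IsAlgClosed L] [CompatibleRing L], L ⊨ φ := by
  have hACF0 : Theory.ACF 0 ⊨ᵇ φ :=
    ((ACF_isComplete (Or.inr rfl)).realize_sentence_iff φ K).1 h
  have hfin := finite_ACF_prime_not_realize_of_ACF_zero_realize φ hACF0
  refine ⟨hfin.toFinset.image (↑), fun p hpS hp L _ _ _ _ => ?_⟩
  refine ((ACF_isComplete (Or.inl hp)).realize_sentence_iff φ L).2 ?_
  by_contra hnot
  exact hpS (Finset.mem_image.2 ⟨⟨p, hp⟩, hfin.mem_toFinset.2 hnot, rfl⟩)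

end FirstOrder.Ring

/-- **Absolute irreducibility is preserved modulo all but finitely many primes.**
If `g ∈ ℤ[X_1,…,X_n]` is irreducible over `AlgebraicClosure ℚ`, then for all primes `p`
outside a finite exceptional set, the reduction of `g` modulo `p` is irreducible over
`AlgebraicClosure 𝔽_p`. -/
theorem abs_irreducible_mod_p_cofinitely {n : ℕ} (g : MvPolynomial (Fin n) ℤ)
    (hg : Irreducible (MvPolynomial.map (Int.castRingHom (AlgebraicClosure ℚ)) g)) :
    ∃ S : Finset ℕ, ∀ (p : ℕ) [Fact p.Prime], p ∉ S →
      Irreducible (MvPolynomial.map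
        ((algebraMap (ZMod p) (AlgebraicClosure (ZMod p))).comp
          (Int.castRingHom (ZMod p))) g) := by
  let D := (Finsupp.finite_of_degree_le (σ := Fin n) g.totalDegree).toFinset
  have hD : ∀ m : Fin n →₀ ℕ, m.degree ≤ g.totalDegree → m ∈ D := fun _ hm =>
    (Set.Finite.mem_toFinset _).2 hm
  let _ := compatibleRingOfRing (AlgebraicClosure ℚ)
  obtain ⟨S, hS⟩ := exists_finset_forall_realize_of_realize_charZero (irreducibleSentence g D)
    ((realize_irreducibleSentence g D hD).2 hg)
  refine ⟨S, fun p _ hp => ?_⟩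
  let _ := compatibleRingOfRing (AlgebraicClosure (ZMod p))
  rw [RingHom.ext_int (RingHom.comp _ _) (Int.castRingHom _)]
  exact (realize_irreducibleSentence g D hD).1 (hS p hp Fact.out _)
end

section
/- Define the rational sequence a_n by a_1 = 1/2 and a_{n+1} = a_n − a_n²/2. Then 0 < a_n ≤ 2/n for every integer n ≥ 1. -/
/-- The sequence `a_1 = 1/2`, `a_{n+1} = a_n − a_n²/2`
(the value at index `0` is a junk value, never used). -/
noncomputable def aseq : ℕ → ℚ
  | 0 => 0
  | 1 => 1 / 2
  | (n + 2) => aseq (n + 1) - (aseq (n + 1)) ^ 2 / 2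

lemma aseq_aux : ∀ n, 1 ≤ n → 0 < aseq n ∧ aseq n ≤ 2 / (n + 1) := by
  intro n hn
  induction n with
  | zero => omega
  | succ m ih =>
    match m with
    | 0 => norm_num [aseq]
    | k + 1 =>
      obtain ⟨h1, h2⟩ := ih (by omega)
      have hb : ((k : ℚ) + 1 + 1) ≥ 2 := by
        have : (0:ℚ) ≤ (k : ℚ) := by positivity
        linarith
      have hx1 : aseq (k + 1) ≤ 1 := by
        have : (2 : ℚ) / ((k : ℚ) + 1 + 1) ≤ 1 := by
          rw [div_le_one (by linarith)]; linarith
        calc aseq (k+1) ≤ 2 / ((k+1 : ℕ) + 1 : ℚ) := h2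
          _ = 2 / ((k : ℚ) + 1 + 1) := by push_cast; ring_nf
          _ ≤ 1 := this
      have h2' : aseq (k + 1) ≤ 2 / ((k : ℚ) + 2) := by
        calc aseq (k+1) ≤ 2 / ((k+1 : ℕ) + 1 : ℚ) := h2
          _ = 2 / ((k : ℚ) + 2) := by push_cast; ring_nf
      have hk2 : ((k : ℚ) + 2) > 0 := by positivity
      have hk3 : ((k : ℚ) + 3) > 0 := by positivity
      have hmul : aseq (k + 1) * ((k : ℚ) + 2) ≤ 2 := by
        calc aseq (k + 1) * ((k : ℚ) + 2) ≤ (2 / ((k:ℚ)+2)) * ((k:ℚ)+2) := by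
              apply mul_le_mul_of_nonneg_right h2' (le_of_lt hk2)
          _ = 2 := by field_simp
      constructor
      · show 0 < aseq (k + 1) - (aseq (k + 1)) ^ 2 / 2
        nlinarith
      · show aseq (k + 1) - (aseq (k + 1)) ^ 2 / 2 ≤ 2 / ((k + 1 + 1 : ℕ) + 1 : ℚ)
        have : ((k + 1 + 1 : ℕ) + 1 : ℚ) = (k : ℚ) + 3 := by push_cast; ring
        rw [this, le_div_iff₀ hk3]
        set x := aseq (k + 1)
        nlinarith [sq_nonneg (x * ((k:ℚ)+2) - 2), sq_nonneg x, mul_pos h1 hk2]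

/-- For every `n ≥ 1`, `0 < a_n ≤ 2/n`. -/
theorem aseq_pos_and_le (n : ℕ) (hn : 1 ≤ n) : 0 < aseq n ∧ aseq n ≤ 2 / n := by
  obtain ⟨h1, h2⟩ := aseq_aux n hn
  refine ⟨h1, h2.trans ?_⟩
  have hn' : (0:ℚ) < n := by exact_mod_cast hn
  apply div_le_div_of_nonneg_left (by norm_num) hn'
  linarith
end

section
/- For every integer d ≥ 1, Σ_{a ∈ (ℤ/dℤ)^×} gcd(ã − 1, d) = φ(d)·τ(d), where for a unit a of ℤ/dℤ, ã − 1 denotes any integer representative of a − 1 ∈ ℤ/dℤ (the gcd with d is independent of the choice of representative). -/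
open Finset

lemma aux_gcd_eq_sum (n d : ℕ) (hd : d ≠ 0) :
    Nat.gcd n d = ∑ e ∈ d.divisors.filter (· ∣ n), e.totient := by
  have h : (Nat.gcd n d).divisors = d.divisors.filter (· ∣ n) := by
    ext e
    simp only [Nat.mem_divisors, Finset.mem_filter, Nat.dvd_gcd_iff]
    constructor
    · rintro ⟨⟨h1, h2⟩, -⟩; exact ⟨⟨h2, hd⟩, h1⟩
    · rintro ⟨⟨h2, -⟩, h1⟩
      exact ⟨⟨h1, h2⟩, Nat.gcd_ne_zero_right hd⟩
  rw [← Nat.sum_totient (Nat.gcd n d), h]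

lemma aux_count (d e : ℕ) [NeZero d] (he : e ∣ d) (he0 : e ≠ 0) :
    e.totient *
      (Finset.univ.filter
        (fun a : (ZMod d)ˣ => e ∣ (((a : ZMod d) - 1).val))).card = d.totient := by
  haveI : NeZero e := ⟨he0⟩
  let f := ZMod.unitsMap (m := d) (n := e) he
  have hf : Function.Surjective f := ZMod.unitsMap_surjective he
  have hiff : ∀ a : (ZMod d)ˣ, e ∣ (((a : ZMod d) - 1).val) ↔ f a = 1 := by
    intro a
    rw [← ZMod.natCast_eq_zero_iff, ZMod.natCast_val]
    have : ((((a : ZMod d) - 1).cast : ZMod e) = 0) ↔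
        (ZMod.castHom he (ZMod e)) ((a : ZMod d) - 1) = 0 := Iff.rfl
    rw [this, map_sub, map_one, sub_eq_zero]
    constructor
    · intro h
      ext
      simpa [f, ZMod.unitsMap, Units.ext_iff] using h
    · intro h
      simpa [f, ZMod.unitsMap, Units.ext_iff] using congrArg Units.val h
  have hcard : (Finset.univ.filter
        (fun a : (ZMod d)ˣ => e ∣ (((a : ZMod d) - 1).val))).card
      = Nat.card f.ker := by
    rw [Nat.card_eq_fintype_card, Fintype.card_subtype]
    congr 1
    ext a
    simp [hiff a, MonoidHom.mem_ker]
  have hmul : Nat.card (ZMod d)ˣ = Nat.card (ZMod e)ˣ * Nat.card f.ker := by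
    rw [Subgroup.card_eq_card_quotient_mul_card_subgroup f.ker]
    congr 1
    exact Nat.card_congr (QuotientGroup.quotientKerEquivOfSurjective f hf).toEquiv
  rw [hcard, ← ZMod.card_units_eq_totient, ← ZMod.card_units_eq_totient,
    ← Nat.card_eq_fintype_card, ← Nat.card_eq_fintype_card, hmul]

/-- For every `d ≥ 1`, `Σ_{a ∈ (ℤ/dℤ)^×} gcd(ã − 1, d) = φ(d)·τ(d)`. -/
theorem sum_gcd_sub_one_eq_totient_mul_tau (d : ℕ) [NeZero d] :
    ∑ a : (ZMod d)ˣ, Nat.gcd (((a : ZMod d) - 1).val) d =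
      Nat.totient d * d.divisors.card := by
  have hd : d ≠ 0 := NeZero.ne d
  calc ∑ a : (ZMod d)ˣ, Nat.gcd (((a : ZMod d) - 1).val) d
      = ∑ a : (ZMod d)ˣ, ∑ e ∈ d.divisors.filter (· ∣ (((a : ZMod d) - 1).val)),
          e.totient := by
        refine Finset.sum_congr rfl fun a _ => aux_gcd_eq_sum _ _ hd
    _ = ∑ a : (ZMod d)ˣ, ∑ e ∈ d.divisors,
          if e ∣ (((a : ZMod d) - 1).val) then e.totient else 0 := by
        simp [Finset.sum_filter]
    _ = ∑ e ∈ d.divisors, ∑ a : (ZMod d)ˣ,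
          if e ∣ (((a : ZMod d) - 1).val) then e.totient else 0 := Finset.sum_comm
    _ = ∑ e ∈ d.divisors, e.totient *
          (Finset.univ.filter
            (fun a : (ZMod d)ˣ => e ∣ (((a : ZMod d) - 1).val))).card := by
        refine Finset.sum_congr rfl fun e _ => ?_
        rw [← Finset.sum_filter, Finset.sum_const, smul_eq_mul, mul_comm]
    _ = ∑ e ∈ d.divisors, d.totient := by
        refine Finset.sum_congr rfl fun e he => ?_
        obtain ⟨hdvd, -⟩ := Nat.mem_divisors.mp he
        exact aux_count d e hdvd (Nat.pos_of_mem_divisors he).ne'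
    _ = Nat.totient d * d.divisors.card := by
        rw [Finset.sum_const, smul_eq_mul, mul_comm]
end

section
/- For every squarefree integer d ≥ 1, Σ_{a ∈ (ℤ/dℤ)^×} 1/gcd(ã − 1, d) = φ(d)²/d, as an identity of rational numbers, where for a unit a of ℤ/dℤ, ã − 1 denotes any integer representative of a − 1 ∈ ℤ/dℤ (the gcd with d is independent of the choice of representative). -/
/-!
By the Chinese remainder theorem a unit of `ℤ/mnℤ` (with `m, n` coprime) is a pair of units
mod `m` and mod `n`, and `gcd(ã - 1, mn)` is the product of the corresponding gcds mod `m` and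
mod `n`; so the sum is multiplicative in `d`, as is `φ(d)²/d`. For a prime `p` the unit `1`
contributes `1/p` and each of the other `p - 2` units contributes `1`, giving `(p - 1)²/p`.
-/

namespace ZMod

theorem gcd_val_cast (m : ℕ) {k : ℕ} [NeZero k] (x : ZMod k) :
    (x.cast : ZMod m).val.gcd m = x.val.gcd m := by
  rw [cast_eq_val, val_natCast, ← Nat.gcd_rec, Nat.gcd_comm]

theorem chineseRemainder_fst {m n : ℕ} (h : m.Coprime n) (x : ZMod (m * n)) :
    (chineseRemainder h x).1 = x.cast :=
  Prod.fst_zmod_cast x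

theorem chineseRemainder_snd {m n : ℕ} (h : m.Coprime n) (x : ZMod (m * n)) :
    (chineseRemainder h x).2 = x.cast :=
  Prod.snd_zmod_cast x

theorem gcd_val_mul {m n : ℕ} [NeZero (m * n)] (h : m.Coprime n) (x : ZMod (m * n)) :
    x.val.gcd (m * n) =
      (chineseRemainder h x).1.val.gcd m * (chineseRemainder h x).2.val.gcd n := by
  rw [chineseRemainder_fst, chineseRemainder_snd, gcd_val_cast, gcd_val_cast, h.gcd_mul]

theorem gcd_val_eq_one_of_ne_zero {p : ℕ} [Fact p.Prime] {x : ZMod p} (hx : x ≠ 0) :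
    x.val.gcd p = 1 :=
  val_coe_unit_coprime (Units.mk0 x hx)

end ZMod

def invGcdSubOneSum (n : ℕ) [NeZero n] : ℚ :=
  ∑ a : (ZMod n)ˣ, (1 : ℚ) / (Nat.gcd (((a : ZMod n) - 1).val) n : ℚ)

theorem invGcdSubOneSum_mul {m n : ℕ} [NeZero m] [NeZero n] (h : m.Coprime n) :
    invGcdSubOneSum (m * n) = invGcdSubOneSum m * invGcdSubOneSum n := by
  let e : (ZMod (m * n))ˣ ≃* (ZMod m)ˣ × (ZMod n)ˣ :=
    (Units.mapEquiv (ZMod.chineseRemainder h).toMulEquiv).trans .prodUnits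
  rw [invGcdSubOneSum, invGcdSubOneSum, invGcdSubOneSum, Fintype.sum_mul_sum,
    ← Fintype.sum_prod_type', ← e.toEquiv.sum_comp]
  refine Fintype.sum_congr _ _ fun a ↦ ?_
  have hsub : ZMod.chineseRemainder h ((a : ZMod (m * n)) - 1) =
      (((e a).1 : ZMod m) - 1, ((e a).2 : ZMod n) - 1) := by
    rw [map_sub, map_one]; rfl
  rw [ZMod.gcd_val_mul h, hsub, Nat.cast_mul, one_div_mul_one_div]
  rfl

theorem invGcdSubOneSum_prime {p : ℕ} [Fact p.Prime] :
    invGcdSubOneSum p = (p.totient : ℚ) ^ 2 / p := by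
  have hp := Fact.out (p := p.Prime)
  have hterm : ∀ a ∈ Finset.univ \ {(1 : (ZMod p)ˣ)},
      (1 : ℚ) / (Nat.gcd (((a : ZMod p) - 1).val) p : ℚ) = 1 := by
    intro a ha
    have : (a : ZMod p) - 1 ≠ 0 := by simpa [sub_eq_zero, Units.val_eq_one] using ha
    simp [ZMod.gcd_val_eq_one_of_ne_zero this]
  rw [invGcdSubOneSum, Finset.sum_eq_sum_sdiff_singleton_add (Finset.mem_univ 1),
    Finset.sum_congr rfl hterm]
  simp only [Finset.sum_const, Finset.card_sdiff, Finset.card_univ, ZMod.card_units_eq_totient,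
    Nat.totient_prime hp, Finset.inter_univ, Finset.card_singleton, nsmul_eq_mul, mul_one,
    Units.val_one, sub_self, ZMod.val_zero, Nat.gcd_zero_left]
  have hp0 : (p : ℚ) ≠ 0 := by exact_mod_cast hp.ne_zero
  rw [Nat.sub_sub, Nat.cast_sub hp.two_le, Nat.cast_sub hp.one_le]
  field_simp
  ring

/-- For every squarefree `d ≥ 1`,
`Σ_{a ∈ (ℤ/dℤ)^×} 1/gcd(ã − 1, d) = φ(d)²/d` as rational numbers. -/
theorem sum_inv_gcd_sub_one_eq_totient_sq_div (d : ℕ) [NeZero d] (hd : Squarefree d) :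
    ∑ a : (ZMod d)ˣ, (1 : ℚ) / (Nat.gcd (((a : ZMod d) - 1).val) d : ℚ) =
      (Nat.totient d : ℚ) ^ 2 / d := by
  change invGcdSubOneSum d = _
  -- the motive must quantify over the instance, which changes with `d`
  revert ‹NeZero d›
  induction d using Nat.recOnPosPrimePosCoprime with
  | zero => exact absurd hd not_squarefree_zero
  | one => intro; simp [invGcdSubOneSum]
  | prime_pow p k hp hk =>
    obtain rfl : k = 1 := ((Nat.squarefree_pow_iff hp.ne_one hk.ne').1 hd).2
    have : Fact p.Prime := ⟨hp⟩
    intro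
    simp only [pow_one]
    exact invGcdSubOneSum_prime
  | coprime a b ha hb hab iha ihb =>
    intro
    have : NeZero a := ⟨by omega⟩
    have : NeZero b := ⟨by omega⟩
    rw [invGcdSubOneSum_mul hab, iha (hd.squarefree_of_dvd (dvd_mul_right a b)),
      ihb (hd.squarefree_of_dvd (dvd_mul_left b a)), Nat.totient_mul hab]
    push_cast
    field_simp
end
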